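/- Let $Q$ be a CTMC rate matrix with stationary distribution $\pi$ (all $\pi_i > 0$), all off-diagonal entries strictly positive, and define $K = \sum_{a \neq b} \pi_a Q_{ab}$ and the entropy $S(t) = -\sum_{a,b} \pi_a P_{ab}(t) \log P_{ab}(t)$ where $P(t) = \exp(tQ)$. Then as $Kt \to 0$ (rescaling $Q$ by positive multiples while keeping $\pi$ and the ratios $Q_{ab}/Q_{cd}$ fixed), $S(t) = -Kt \log(Kt) + O(Kt)$. -/

import Mathlib

/-!
Write `s = c t`, so that `P = exp (s • Q₀)` and `K t = K₀ s`. Entrywise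
`P_ab = δ_ab + s Q_ab + O(s²)`. A diagonal term `P_aa log P_aa` is `O(s)` because `x log x`
vanishes to first order at `x = 1`. An off-diagonal term is `s Q_ab log (K₀ s) + O(s)`:
`P_ab / s → Q_ab > 0`, and the quadratic error only costs `s² log s = o(s)`. Weighted by `π_a`,
the off-diagonal leading terms add up to `K₀ s log (K₀ s)`.
-/

open Filter Topology Asymptotics

lemma isBigO_mul_log_of_tendsto_one {α : Type*} {l : Filter α} {x g : α → ℝ}
    (hx : Tendsto x l (𝓝 1)) (h : (fun a => x a - 1) =O[l] g) :
    (fun a => x a * Real.log (x a)) =O[l] g := by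
  have := ((Real.hasDerivAt_mul_log one_ne_zero).isBigO_sub.comp_tendsto hx).trans h
  simp only [Real.log_one, mul_zero, sub_zero] at this
  exact this

lemma tendsto_mul_log_const_mul_nhds_zero (K : ℝ) :
    Tendsto (fun s => s * Real.log (K * s)) (𝓝 0) (𝓝 0) := by
  rcases eq_or_ne K 0 with rfl | hK
  · simp
  have h := (Real.continuous_mul_log.tendsto' 0 0 (by simp)).comp
    ((continuous_const_mul K).tendsto' 0 0 (mul_zero K))
  simpa [Function.comp_def, mul_assoc, hK] using h.const_mul K⁻¹

lemma isBigO_mul_log_sub_mul_log_of_isBigO {x : ℝ → ℝ} {q K : ℝ} (hq : q ≠ 0) (hK : K ≠ 0)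
    (hx : (fun s => x s - q * s) =O[𝓝[≠] 0] fun s => s ^ 2) :
    (fun s => x s * Real.log (x s) - q * s * Real.log (K * s)) =O[𝓝[≠] 0] fun s => s := by
  have hne : ∀ᶠ s in 𝓝[≠] (0 : ℝ), s ≠ 0 := self_mem_nhdsWithin
  have hratio : Tendsto (fun s => x s / s) (𝓝[≠] 0) (𝓝 q) := by
    have h : (fun s => x s / s - q) =O[𝓝[≠] 0] fun s => s := by
      refine (hx.mul (isBigO_refl (fun s : ℝ => s⁻¹) _)).congr' ?_ ?_ <;>
        filter_upwards [hne] with s hs <;> field_simp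
    simpa using (h.trans_tendsto (tendsto_id.mono_left nhdsWithin_le_nhds)).add_const q
  have hx_lin : x =O[𝓝[≠] 0] fun s => s := by
    refine ((hratio.isBigO_one ℝ).mul (isBigO_refl (fun s => s) _)).congr' ?_ (by simp)
    filter_upwards [hne] with s hs
    simp [div_mul_cancel₀ _ hs]
  have hlog : Tendsto (fun s => Real.log (x s / (K * s))) (𝓝[≠] 0) (𝓝 (Real.log (q / K))) := by
    refine ((hratio.div_const K).log (div_ne_zero hq hK)).congr' ?_
    filter_upwards [hne] with s hs
    rw [div_div, mul_comm]
  have hsq_log : (fun s => s ^ 2 * Real.log (K * s)) =O[𝓝[≠] 0] fun s => s := by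
    simpa [pow_two, mul_assoc] using (isBigO_refl (fun s => s) (𝓝[≠] (0 : ℝ))).mul
      (((tendsto_mul_log_const_mul_nhds_zero K).mono_left nhdsWithin_le_nhds).isBigO_one ℝ)
  have hrem : (fun s => x s * Real.log (x s / (K * s))) =O[𝓝[≠] 0] fun s => s := by
    simpa using hx_lin.mul (hlog.isBigO_one ℝ)
  -- `x log x - q s log (K s) = (x - q s) log (K s) + x log (x / (K s))`
  refine (((hx.mul (isBigO_refl _ _)).trans hsq_log).add hrem).congr' ?_ EventuallyEq.rfl
  filter_upwards [hne] with s hs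
  rcases eq_or_ne (x s) 0 with h0 | h0
  · simp [h0]
  rw [Real.log_div h0 (mul_ne_zero hK hs)]
  ring

lemma exists_pos_bound_of_isBigO_nhdsGT {f : ℝ → ℝ} {K : ℝ} (hK : 0 < K)
    (hf : f =O[𝓝[>] 0] fun s => s) :
    ∃ C > 0, ∃ δ > 0, ∀ s > 0, K * s < δ → |f s| ≤ C * (K * s) := by
  obtain ⟨C, hC, hCf⟩ := hf.exists_pos
  obtain ⟨ε, hε, hεf⟩ := (nhdsGT_basis 0).eventually_iff.mp hCf.bound
  refine ⟨C / K, div_pos hC hK, K * ε, mul_pos hK hε, fun s hs hsδ => ?_⟩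
  have := hεf ⟨hs, (mul_lt_mul_iff_right₀ hK).mp hsδ⟩
  rw [Real.norm_eq_abs, Real.norm_eq_abs, abs_of_pos hs] at this
  rwa [div_mul_eq_mul_div, mul_div_assoc, mul_div_cancel_left₀ _ hK.ne']

lemma isBigO_exp_smul_sub_one_sub {𝔸 : Type*} [NormedRing 𝔸] [NormedAlgebra ℝ 𝔸]
    [CompleteSpace 𝔸] (A : 𝔸) :
    (fun s : ℝ => NormedSpace.exp (s • A) - 1 - s • A) =O[𝓝 0] fun s => s ^ 2 := by
  have hA : Tendsto (fun s : ℝ => s • A) (𝓝 0) (𝓝 0) := by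
    simpa using (tendsto_id (x := 𝓝 (0 : ℝ))).smul_const A
  have h := ((NormedSpace.exp_hasFPowerSeriesAt_zero (𝕂 := ℝ) (𝔸 := 𝔸)).isBigO_sub_partialSum_pow
    2).comp_tendsto hA
  refine (h.congr_left fun s => ?_).trans (isBigO_of_le' (c := ‖A‖ ^ 2) _ fun s => ?_)
  · simp [FormalMultilinearSeries.partialSum, Finset.sum_range_succ,
      NormedSpace.expSeries_apply_eq, sub_sub]
  · simp [norm_smul, mul_pow, mul_comm]

namespace Matrix

section LinftyOp

-- Matrices carry no norm instance; the `ℓ∞` operator norm makes them a Banach algebra.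
attribute [local instance] Matrix.linftyOpSeminormedAddCommGroup Matrix.linftyOpNormedRing
  Matrix.linftyOpNormedAlgebra

lemma norm_entry_le_linfty_opNorm {m n α : Type*} [Fintype m] [Fintype n]
    [SeminormedAddCommGroup α] (M : Matrix m n α) (i : m) (j : n) : ‖M i j‖ ≤ ‖M‖ := by
  rw [linfty_opNorm_def, ← coe_nnnorm]
  exact_mod_cast (Finset.single_le_sum (f := fun j => ‖M i j‖₊) (fun _ _ => zero_le)
    (Finset.mem_univ j)).trans (Finset.le_sup (f := fun i => ∑ j, ‖M i j‖₊) (Finset.mem_univ i))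

lemma isBigO_exp_smul_apply_sub {n : Type*} [Fintype n] [DecidableEq n] (Q : Matrix n n ℝ)
    (a b : n) :
    (fun s : ℝ => NormedSpace.exp (s • Q) a b - (1 : Matrix n n ℝ) a b - s * Q a b)
      =O[𝓝 0] fun s => s ^ 2 :=
  (isBigO_of_le _ fun s => norm_entry_le_linfty_opNorm
    (NormedSpace.exp (s • Q) - 1 - s • Q) a b).trans (isBigO_exp_smul_sub_one_sub Q)

end LinftyOp

variable {n : Type*} [Fintype n] [DecidableEq n]

lemma isBigO_exp_smul_apply_self_mul_log (Q : Matrix n n ℝ) (a : n) :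
    (fun s : ℝ => NormedSpace.exp (s • Q) a a * Real.log (NormedSpace.exp (s • Q) a a))
      =O[𝓝 0] fun s => s := by
  have h : (fun s : ℝ => NormedSpace.exp (s • Q) a a - 1) =O[𝓝 0] fun s => s := by
    have := ((isBigO_exp_smul_apply_sub Q a a).trans (isLittleO_pow_id one_lt_two).isBigO).add
      ((isBigO_refl (fun s : ℝ => s) _).const_mul_left (Q a a))
    simpa [mul_comm] using this
  refine isBigO_mul_log_of_tendsto_one ?_ h
  simpa using (h.trans_tendsto tendsto_id).add_const 1

lemma isBigO_exp_smul_apply_mul_log_sub (Q : Matrix n n ℝ) {a b : n} (hab : a ≠ b)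
    (hQ : Q a b ≠ 0) {K : ℝ} (hK : K ≠ 0) :
    (fun s : ℝ => NormedSpace.exp (s • Q) a b * Real.log (NormedSpace.exp (s • Q) a b)
      - Q a b * s * Real.log (K * s)) =O[𝓝[≠] 0] fun s => s :=
  isBigO_mul_log_sub_mul_log_of_isBigO hQ hK <| by
    simpa [one_apply_ne hab, mul_comm] using
      (isBigO_exp_smul_apply_sub Q a b).mono nhdsWithin_le_nhds

def jumpRate (π : n → ℝ) (Q : Matrix n n ℝ) : ℝ :=
  ∑ a, ∑ b ∈ Finset.univ.erase a, π a * Q a b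

lemma jumpRate_pos [Nontrivial n] {π : n → ℝ} (hπ : ∀ a, 0 < π a) {Q : Matrix n n ℝ}
    (hoff : ∀ a b, a ≠ b → 0 < Q a b) : 0 < jumpRate π Q := by
  have hterm : ∀ a, ∀ b ∈ Finset.univ.erase a, 0 < π a * Q a b := fun a b hb =>
    mul_pos (hπ a) (hoff a b (Finset.ne_of_mem_erase hb).symm)
  obtain ⟨a, b, hab⟩ := exists_pair_ne n
  have hb : b ∈ Finset.univ.erase a := Finset.mem_erase.mpr ⟨hab.symm, Finset.mem_univ b⟩
  exact Finset.sum_pos' (fun a _ => Finset.sum_nonneg fun b hb => (hterm a b hb).le)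
    ⟨a, Finset.mem_univ a, Finset.sum_pos' (fun b hb => (hterm a b hb).le) ⟨b, hb, hterm a b hb⟩⟩

noncomputable def transitionEntropy (π : n → ℝ) (P : Matrix n n ℝ) : ℝ :=
  -∑ a, ∑ b, π a * P a b * Real.log (P a b)

lemma transitionEntropy_one (π : n → ℝ) : transitionEntropy π 1 = 0 := by
  simp only [transitionEntropy, neg_eq_zero]
  refine Finset.sum_eq_zero fun a _ => Finset.sum_eq_zero fun b _ => ?_
  rcases eq_or_ne a b with rfl | hab
  · simp
  · simp [hab]

lemma isBigO_transitionEntropy_exp_smul_add (Q : Matrix n n ℝ) (π : n → ℝ)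
    (hoff : ∀ a b, a ≠ b → Q a b ≠ 0) (hK : jumpRate π Q ≠ 0) :
    (fun s : ℝ => transitionEntropy π (NormedSpace.exp (s • Q))
      + jumpRate π Q * s * Real.log (jumpRate π Q * s)) =O[𝓝[≠] 0] fun s => s := by
  set K := jumpRate π Q with hKdef
  have hsplit : ∀ (P : Matrix n n ℝ) (s : ℝ), transitionEntropy π P + K * s * Real.log (K * s) =
      -∑ a, π a * (P a a * Real.log (P a a) + ∑ b ∈ Finset.univ.erase a,
        (P a b * Real.log (P a b) - Q a b * s * Real.log (K * s))) := by
    intro P s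
    have hdiag : ∀ a, ∑ b, π a * P a b * Real.log (P a b) = π a * P a a * Real.log (P a a)
        + ∑ b ∈ Finset.univ.erase a, π a * P a b * Real.log (P a b) :=
      fun a => (Finset.add_sum_erase _ _ (Finset.mem_univ a)).symm
    simp only [transitionEntropy, hdiag]
    nth_rw 1 [hKdef]
    simp only [jumpRate, Finset.sum_mul, Finset.mul_sum, mul_add, mul_sub, Finset.sum_add_distrib,
      Finset.sum_sub_distrib, mul_assoc]
    ring
  refine IsBigO.congr_left ?_ fun s => (hsplit _ s).symm
  refine (IsBigO.fun_sum fun a _ => ?_).neg_left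
  refine (((isBigO_exp_smul_apply_self_mul_log Q a).mono nhdsWithin_le_nhds).add
    (IsBigO.fun_sum fun b hb => ?_)).const_mul_left (π a)
  exact isBigO_exp_smul_apply_mul_log_sub Q (Finset.ne_of_mem_erase hb).symm
    (hoff a b (Finset.ne_of_mem_erase hb).symm) hK

end Matrix

theorem entropy_small_Kt_expansion_general
    {n : Type*} [Fintype n] [DecidableEq n]
    (Q₀ : Matrix n n ℝ) (π : n → ℝ)
    (hπpos : ∀ i, 0 < π i)
    (hoff : ∀ a b : n, a ≠ b → 0 < Q₀ a b)
    (hrow : ∀ a : n, ∑ b, Q₀ a b = 0)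
    (K₀ : ℝ)
    (hK₀ : K₀ = ∑ a, ∑ b ∈ Finset.univ.erase a, π a * Q₀ a b) :
    ∃ C > (0:ℝ), ∃ δ > (0:ℝ), ∀ c > (0:ℝ), ∀ t > (0:ℝ),
      c * K₀ * t < δ →
      |(-(∑ a, ∑ b, π a * NormedSpace.exp (t • (c • Q₀)) a b
            * Real.log (NormedSpace.exp (t • (c • Q₀)) a b)))
          - (-(c * K₀ * t) * Real.log (c * K₀ * t))|
        ≤ C * (c * K₀ * t) := by
  rcases subsingleton_or_nontrivial n with hn | hn
  · have hQ : Q₀ = 0 := by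
      ext a b
      obtain rfl := Subsingleton.elim a b
      simpa [Fintype.sum_subsingleton _ a] using hrow a
    refine ⟨1, one_pos, 1, one_pos, fun c _ t _ _ => ?_⟩
    simpa [hQ, hK₀, Matrix.transitionEntropy] using Matrix.transitionEntropy_one π
  have hKdef : Matrix.jumpRate π Q₀ = K₀ := hK₀.symm
  have hK : 0 < K₀ := hKdef ▸ Matrix.jumpRate_pos hπpos hoff
  obtain ⟨C, hC, δ, hδ, hbound⟩ := exists_pos_bound_of_isBigO_nhdsGT hK
    ((Matrix.isBigO_transitionEntropy_exp_smul_add Q₀ π (fun a b h => (hoff a b h).ne')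
      (hKdef ▸ hK.ne')).mono (nhdsGT_le_nhdsNE 0))
  refine ⟨C, hC, δ, hδ, fun c hc t ht hlt => ?_⟩
  rw [smul_smul, mul_comm t c]
  rw [show c * K₀ * t = K₀ * (c * t) by ring] at hlt ⊢
  simpa [Matrix.transitionEntropy, hKdef, neg_mul, sub_neg_eq_add]
    using hbound (c * t) (mul_pos hc ht) hlt

/-- Let `Q₀` be a CTMC rate matrix with stationary distribution `π`
(all `π i > 0`), all off-diagonal entries strictly positive, and let
`K₀ = ∑_{a ≠ b} π_a (Q₀)_{ab}`. Rescaling `Q = c • Q₀` by positive multiples `c`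
(which keeps `π` and the ratios `Q_ab/Q_cd` fixed and gives `K = c K₀`), the entropy
`S(t) = -∑_{a,b} π_a P_ab(t) log P_ab(t)` with `P(t) = exp(t • Q)` satisfies
`S(t) = -Kt log(Kt) + O(Kt)` as `Kt → 0`. -/
theorem entropy_small_Kt_expansion
    {n : Type*} [Fintype n] [DecidableEq n]
    (Q₀ : Matrix n n ℝ) (π : n → ℝ)
    (hπpos : ∀ i, 0 < π i) (hπsum : ∑ i, π i = 1)
    (hoff : ∀ a b : n, a ≠ b → 0 < Q₀ a b)
    (hrow : ∀ a : n, ∑ b, Q₀ a b = 0)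
    (hstat : ∀ b : n, ∑ a, π a * Q₀ a b = 0)
    (K₀ : ℝ)
    (hK₀ : K₀ = ∑ a, ∑ b ∈ Finset.univ.erase a, π a * Q₀ a b) :
    ∃ C > (0:ℝ), ∃ δ > (0:ℝ), ∀ c > (0:ℝ), ∀ t > (0:ℝ),
      c * K₀ * t < δ →
      |(-(∑ a, ∑ b, π a * NormedSpace.exp (t • (c • Q₀)) a b
            * Real.log (NormedSpace.exp (t • (c • Q₀)) a b)))
          - (-(c * K₀ * t) * Real.log (c * K₀ * t))|
        ≤ C * (c * K₀ * t) :=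
  entropy_small_Kt_expansion_general Q₀ π hπpos hoff hrow K₀ hK₀
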